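/- Visser's ADN theorem: suppose δ is a partial computable function that is fixed point free, i.e. δ(n)↓ implies W_{δ(n)} ≠ W_n. Then for every partial computable function ψ there exists a total computable function f such that for every n: if ψ(n)↓ then W_{f(n)} = W_{ψ(n)}, and if ψ(n)↑ then δ(f(n))↑. -/

import Mathlib

/-- The `e`-th partial computable function in a standard numbering
satisfying the S-m-n theorem. -/
def phi (e : ℕ) : ℕ →. ℕ := (Denumerable.ofNat Nat.Partrec.Code e).eval

/-- The `e`-th computably enumerable set `W e = dom (phi e)`. -/
def W (e : ℕ) : Set ℕ := {n | (phi e n).Dom}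

/-!
Run ψ(n) and δ(f n) in parallel and let `f n` be, by the recursion theorem with parameters, an
index that copies `phi m` for the first output `m` of this race. Were the race won by δ with
`m ∈ δ (f n)`, we would get `W (f n) = W m`, contradicting fixed-point freeness; so every output
of the race comes from ψ(n). Hence `W (f n) = W (ψ n)` when ψ(n)↓, and when δ(f n)↓ the race
halts, forcing ψ(n)↓.
-/

open Nat.Partrec (Code)

theorem partrec₂_phi : Partrec₂ phi :=
  Code.eval_part.comp ((Computable.ofNat Code).comp Computable.fst) Computable.snd

theorem phi_encode (c : Code) : phi (Encodable.encode c) = c.eval := by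
  simp only [phi, Denumerable.ofNat_encode]

/-- The recursion theorem with parameters. -/
theorem exists_computable_phi_eq {G : ℕ → ℕ → ℕ →. ℕ}
    (hG : Partrec₂ fun (p : ℕ × ℕ) (x : ℕ) => G p.1 p.2 x) :
    ∃ f : ℕ → ℕ, Computable f ∧ ∀ n x, phi (f n) x = G n (f n) x := by
  have hn : Primrec fun q : Code × ℕ => q.2.unpair.1 :=
    Primrec.fst.comp (Primrec.unpair.comp Primrec.snd)
  have hcurry : Primrec fun q : Code × ℕ => Encodable.encode (q.1.curry q.2.unpair.1) :=
    Primrec.encode.comp (Code.primrec₂_curry.comp Primrec.fst hn)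
  have hx : Primrec fun q : Code × ℕ => q.2.unpair.2 :=
    Primrec.snd.comp (Primrec.unpair.comp Primrec.snd)
  obtain ⟨c, hc⟩ := Code.fixed_point₂ (f := fun c m =>
    G m.unpair.1 (Encodable.encode (c.curry m.unpair.1)) m.unpair.2)
    (hG.comp (hn.to_comp.pair hcurry.to_comp) hx.to_comp)
  refine ⟨fun n => Encodable.encode (c.curry n),
    (Primrec.encode.comp (Code.primrec₂_curry.comp (Primrec.const c) Primrec.id)).to_comp,
    fun n x => ?_⟩
  simp only [phi_encode, Code.eval_curry, hc, Nat.unpair_pair]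

theorem W_eq_of_phi_eq_bind {e m : ℕ} {p : Part ℕ}
    (he : ∀ x, phi e x = p.bind fun m => phi m x) (hm : m ∈ p) : W e = W m := by
  ext x
  simp only [W, Set.mem_ofPred_eq, he x, Part.eq_some_iff.2 hm, Part.bind_some]

/-- Visser's ADN theorem. -/
theorem visser_adn (δ : ℕ →. ℕ) (hδ : Partrec δ)
    (hfpf : ∀ n : ℕ, ∀ y ∈ δ n, W y ≠ W n)
    (ψ : ℕ →. ℕ) (hψ : Partrec ψ) :
    ∃ f : ℕ → ℕ, Computable f ∧ ∀ n : ℕ,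
      (∀ y ∈ ψ n, W (f n) = W y) ∧ (¬ (ψ n).Dom → ¬ (δ (f n)).Dom) := by
  obtain ⟨race, hrace, hspec⟩ := Partrec.merge'
    (hψ.comp Computable.fst) (hδ.comp Computable.snd)
  obtain ⟨f, hf, hfix⟩ := exists_computable_phi_eq
    (G := fun n e x => (race (n, e)).bind (phi · x))
    ((hrace.comp Computable.fst).bind
      (partrec₂_phi.comp Computable.snd (Computable.snd.comp Computable.fst)))
  have hW n : ∀ m ∈ race (n, f n), W (f n) = W m := fun m hm => W_eq_of_phi_eq_bind (hfix n) hm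
  have hψwins n : ∀ m ∈ race (n, f n), m ∈ ψ n := fun m hm =>
    ((hspec (n, f n)).1 m hm).resolve_right fun hδm => hfpf (f n) m hδm (hW n m hm).symm
  refine ⟨f, hf, fun n => ⟨fun y hy => ?_, fun hψn hδn => ?_⟩⟩
  · have hdom := (hspec (n, f n)).2.2 (Or.inl (Part.dom_iff_mem.2 ⟨_, hy⟩))
    rw [hW n _ (Part.get_mem hdom), Part.mem_unique hy (hψwins n _ (Part.get_mem hdom))]
  · have hdom := (hspec (n, f n)).2.2 (Or.inr hδn)
    exact hψn (Part.dom_iff_mem.2 ⟨_, hψwins n _ (Part.get_mem hdom)⟩)
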